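/- arXiv:1805.11342 — 3 statements merged into one kernel-verified Lean document; each statement's English description precedes it below -/
import Mathlib

section
/- For every functional G : (ℕ → ℕ) → ℕ, there exist finitely many functions f₁, …, f_k : ℕ → ℕ with fᵢ(n) ≤ 1 for all n, such that for every f : ℕ → ℕ with f(n) ≤ 1 for all n there is some i ≤ k with f(j) = fᵢ(j) for all j < G(fᵢ). -/
open Topology

theorem isCompact_setOf_forall_le {ι : Type*} (b : ℕ) : IsCompact {f : ι → ℕ | ∀ i, f i ≤ b} := by
  simpa [Set.pi] using isCompact_univ_pi fun _ : ι => (Set.finite_Iic b).isCompact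

theorem setOf_forall_lt_eq_mem_nhds {α : Type*} [TopologicalSpace α] [DiscreteTopology α]
    (f : ℕ → α) (n : ℕ) : {g : ℕ → α | ∀ j < n, g j = f j} ∈ 𝓝 f := by
  have hpi : {g : ℕ → α | ∀ j < n, g j = f j} = (Set.Iio n).pi fun j => {f j} := by
    ext g; simp
  rw [hpi]
  exact (isOpen_set_pi (Set.finite_Iio n) fun j _ => isOpen_discrete {f j}).mem_nhds
    fun j _ => rfl

/-- HBU_c: Heine–Borel compactness of Cantor space for canonical covers.
For every `G : (ℕ → ℕ) → ℕ` there are finitely many binary sequences `f₁, …, f_k`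
such that every binary sequence `g` agrees with some `fᵢ` on all `j < G fᵢ`. -/
theorem HBUc (G : (ℕ → ℕ) → ℕ) :
    ∃ (k : ℕ) (f : Fin k → (ℕ → ℕ)), (∀ i, ∀ n, f i n ≤ 1) ∧
      ∀ g : ℕ → ℕ, (∀ n, g n ≤ 1) → ∃ i, ∀ j < G (f i), g j = f i j := by
  obtain ⟨t, ht_binary, ht_cover⟩ := (isCompact_setOf_forall_le 1).elim_nhds_subcover
    (fun f => {g | ∀ j < G f, g j = f j}) fun f _ => setOf_forall_lt_eq_mem_nhds f (G f)
  refine ⟨t.card, fun i => t.equivFin.symm i, fun i => ht_binary _ (t.equivFin.symm i).2,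
    fun g hg => ?_⟩
  obtain ⟨f, hft, hgf⟩ := Set.mem_iUnion₂.1 (ht_cover hg)
  exact ⟨t.equivFin ⟨f, hft⟩, by simpa using hgf⟩
end

section
/- Let T be a set of finite binary sequences (lists of Booleans) that is closed under initial segments, and suppose there exists a rational c > 0 such that for every n ∈ ℕ the number of sequences in T of length n is at least c · 2ⁿ. Then T has an infinite path, i.e., there exists f : ℕ → Bool such that for every n the length-n initial segment (f(0), …, f(n−1)) belongs to T. -/
/-! Positive measure forces every level of the tree to be nonempty. The sets of infinite
sequences whose length-`n` prefix lies in the tree then form a decreasing sequence of nonempty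
closed subsets of the compact Cantor space, so they have a common point, which is a path. -/

namespace List

variable {α : Type*}

theorem ofFn_prefix_ofFn_succ (f : ℕ → α) (n : ℕ) :
    (ofFn fun i : Fin n => f i) <+: ofFn fun i : Fin (n + 1) => f i :=
  ⟨[f n], by rw [ofFn_succ', concat_eq_append]; rfl⟩

theorem exists_ofFn_eq [Nonempty α] (l : List α) :
    ∃ f : ℕ → α, (ofFn fun i : Fin l.length => f i) = l :=
  ⟨fun i => l.getD i (Classical.arbitrary α),
    ext_getElem (by simp) fun i _ _ => by simp⟩

theorem isClosed_setOf_ofFn_mem [TopologicalSpace α] [DiscreteTopology α] (S : Set (List α))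
    (n : ℕ) : IsClosed {f : ℕ → α | (ofFn fun i : Fin n => f i) ∈ S} :=
  (isClosed_discrete {g : Fin n → α | ofFn g ∈ S}).preimage
    (f := fun (f : ℕ → α) (i : Fin n) => f i)
    (continuous_pi fun i : Fin n => continuous_apply (i : ℕ))

/-- König's lemma for trees over a finite alphabet. -/
theorem exists_path_of_forall_exists_length_eq [Finite α] (T : Set (List α))
    (hT : ∀ l₁ l₂ : List α, l₁ <+: l₂ → l₂ ∈ T → l₁ ∈ T)
    (hlevel : ∀ n : ℕ, ∃ l ∈ T, l.length = n) :
    ∃ f : ℕ → α, ∀ n : ℕ, (ofFn fun i : Fin n => f i) ∈ T := by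
  let _ : TopologicalSpace α := ⊥
  have : DiscreteTopology α := ⟨rfl⟩
  have : Nonempty α := by
    obtain ⟨l, -, hl⟩ := hlevel 1
    exact ⟨l.head (ne_nil_of_length_eq_add_one hl)⟩
  let C : ℕ → Set (ℕ → α) := fun n => {f | (ofFn fun i : Fin n => f i) ∈ T}
  have hC_succ : ∀ n, C (n + 1) ⊆ C n := fun n f hf => hT _ _ (ofFn_prefix_ofFn_succ f n) hf
  have hC_nonempty : ∀ n, (C n).Nonempty := fun n => by
    obtain ⟨l, hl, rfl⟩ := hlevel n
    obtain ⟨f, hf⟩ := exists_ofFn_eq l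
    exact ⟨f, show (ofFn fun i : Fin l.length => f i) ∈ T by rwa [hf]⟩
  have hC_closed : ∀ n, IsClosed (C n) := isClosed_setOf_ofFn_mem T
  obtain ⟨f, hf⟩ := IsCompact.nonempty_iInter_of_sequence_nonempty_isCompact_isClosed C hC_succ
    hC_nonempty (hC_closed 0).isCompact hC_closed
  exact ⟨f, Set.mem_iInter.mp hf⟩

end List

theorem Set.nonempty_of_pos_le_ncard {α R : Type*} [AddMonoidWithOne R] [Preorder R]
    {s : Set α} {x : R} (hx : 0 < x) (h : x ≤ s.ncard) : s.Nonempty :=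
  Set.nonempty_of_ncard_ne_zero fun h0 => (hx.trans_le h).ne' (by rw [h0, Nat.cast_zero])

/-- WWKL: weak weak König's lemma. Every binary tree (set of finite boolean sequences
closed under initial segments) of positive measure has an infinite path. -/
theorem WWKL (T : Set (List Bool))
    (hT : ∀ l₁ l₂ : List Bool, l₁ <+: l₂ → l₂ ∈ T → l₁ ∈ T)
    (hpos : ∃ c : ℚ, 0 < c ∧ ∀ n : ℕ,
      c * 2 ^ n ≤ (Set.ncard {l : List Bool | l ∈ T ∧ l.length = n} : ℚ)) :
    ∃ f : ℕ → Bool, ∀ n : ℕ, (List.ofFn fun i : Fin n => f i) ∈ T := by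
  obtain ⟨c, hc, hlevel⟩ := hpos
  refine List.exists_path_of_forall_exists_length_eq T hT fun n => ?_
  obtain ⟨l, hl, hlen⟩ := Set.nonempty_of_pos_le_ncard (by positivity) (hlevel n)
  exact ⟨l, hl, hlen⟩
end

section
/- There exists a functional Φ : ((ℕ → ℕ) → ℕ) → ℕ such that for every Y : (ℕ → ℕ) → ℕ that is continuous with respect to the product topology on ℕ → ℕ (where ℕ is discrete), and for all f, g : ℕ → ℕ with f(n) ≤ 1 and g(n) ≤ 1 for all n, if f(i) = g(i) for all i < Φ(Y) then Y(f) = Y(g). -/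
/-!
Cantor space is compact, and a continuous `Y` into the discrete space `ℕ` is constant on a basic
open neighbourhood of each point; such a neighbourhood constrains only finitely many coordinates.
Finitely many of these neighbourhoods cover Cantor space, so agreement on the union of their
coordinate sets — a subset of some `range N` — forces equal values of `Y`.
-/

open Topology

section Pi

variable {ι β : Type*} {X : ι → Type*} [∀ i, TopologicalSpace (X i)]
  [TopologicalSpace β] [DiscreteTopology β] {Y : (∀ i, X i) → β}

theorem Continuous.exists_finset_nhds_eq_of_forall_eq (hY : Continuous Y) (f : ∀ i, X i) :
    ∃ I : Finset ι, ∃ U ∈ 𝓝 f, ∀ g ∈ U, ∀ h, (∀ i ∈ I, g i = h i) → Y h = Y f := by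
  obtain ⟨I, u, hu, hsub⟩ := isOpen_pi_iff.1 ((isOpen_discrete {Y f}).preimage hY) f rfl
  refine ⟨I, (I : Set ι).pi u,
    (isOpen_set_pi I.finite_toSet fun i hi => (hu i hi).1).mem_nhds fun i hi => (hu i hi).2,
    fun g hg h hgh => hsub fun i hi => hgh i hi ▸ hg i hi⟩

theorem IsCompact.exists_finset_eq_of_forall_eq {K : Set (∀ i, X i)} (hK : IsCompact K)
    (hY : Continuous Y) :
    ∃ J : Finset ι, ∀ f ∈ K, ∀ g, (∀ i ∈ J, f i = g i) → Y f = Y g := by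
  classical
  choose I U hU hI using hY.exists_finset_nhds_eq_of_forall_eq
  obtain ⟨t, -, hKt⟩ := hK.elim_nhds_subcover U fun f _ => hU f
  refine ⟨t.biUnion I, fun f hf g hfg => ?_⟩
  obtain ⟨f₀, hf₀, hfU⟩ := Set.mem_iUnion₂.1 (hKt hf)
  have hfg₀ : ∀ i ∈ I f₀, f i = g i := fun i hi => hfg i (Finset.mem_biUnion.2 ⟨f₀, hf₀, hi⟩)
  rw [hI f₀ f hfU f fun _ _ => rfl, hI f₀ f hfU g hfg₀]

end Pi

theorem isCompact_cantorSpace : IsCompact {f : ℕ → ℕ | ∀ n, f n ≤ 1} := by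
  show IsCompact (Set.Iic (1 : ℕ → ℕ))
  exact Set.Icc_bot (a := (1 : ℕ → ℕ)) ▸ isCompact_Icc

theorem Continuous.exists_modulus_cantorSpace {Y : (ℕ → ℕ) → ℕ} (hY : Continuous Y) :
    ∃ N : ℕ, ∀ f, (∀ n, f n ≤ 1) → ∀ g, (∀ i < N, f i = g i) → Y f = Y g := by
  obtain ⟨J, hJ⟩ := isCompact_cantorSpace.exists_finset_eq_of_forall_eq hY
  obtain ⟨N, hN⟩ := J.exists_nat_subset_range
  exact ⟨N, fun f hf g hfg => hJ f hf g fun i hi => hfg i (Finset.mem_range.1 (hN hi))⟩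

/-- FF: the classical fan functional exists. There is `Φ` providing, for every
continuous `Y : (ℕ → ℕ) → ℕ`, a modulus `Φ Y` of uniform continuity of `Y` on
Cantor space. -/
theorem FF :
    ∃ Φ : ((ℕ → ℕ) → ℕ) → ℕ, ∀ Y : (ℕ → ℕ) → ℕ, Continuous Y →
      ∀ f g : ℕ → ℕ, (∀ n, f n ≤ 1) → (∀ n, g n ≤ 1) →
        (∀ i < Φ Y, f i = g i) → Y f = Y g := by
  have modulus : ∀ Y : (ℕ → ℕ) → ℕ, ∃ N : ℕ,
      Continuous Y → ∀ f, (∀ n, f n ≤ 1) → ∀ g, (∀ i < N, f i = g i) → Y f = Y g := by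
    intro Y
    by_cases hY : Continuous Y
    · exact hY.exists_modulus_cantorSpace.imp fun _ hN _ => hN
    · exact ⟨0, fun h => absurd h hY⟩
  choose Φ hΦ using modulus
  exact ⟨Φ, fun Y hY f g hf _ hfg => hΦ Y hY f hf g hfg⟩
end
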